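/- If a family (a_i)_{i∈I} of elements of an implicative algebra is SK (supercompact), then it is fSK (functionally supercompact): for every ×-functional family (b^i_j)_{i∈I,j∈J}, if ⋀_i(a_i → ∃_{j∈J} b^i_j) ∈ Σ then the function f : I → J with ⋀_i(a_i → b^i_{f(i)}) ∈ Σ exists and is unique. -/
import Mathlib


structure ImpStr (α : Type) [CompleteLattice α] where
  imp : α → α → α
  imp_mono : ∀ {a a' b b' : α}, a' ≤ a → b ≤ b' → imp a b ≤ imp a' b'
  imp_iInf : ∀ (a : α) (B : Set α), imp a (sInf B) = ⨅ b ∈ B, imp a b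

namespace ImpStr

variable {α : Type} [CompleteLattice α] (S : ImpStr α)

/-- Application: `a · b := ⋀ {x | a ≤ b → x}`. -/
def app (a b : α) : α := sInf {x | a ≤ S.imp b x}

/-- Abstraction of a function `f : α → α`: `λ(f) := ⋀_{a} (a → f a)`. -/
def lam (f : α → α) : α := ⨅ a : α, S.imp a (f a)

end ImpStr

structure ImpAlg (α : Type) [CompleteLattice α] extends ImpStr α where
  Sep : Set α
  sep_up : ∀ {a b : α}, a ∈ Sep → a ≤ b → b ∈ Sep
  sep_K : (⨅ a : α, ⨅ b : α, imp a (imp b a)) ∈ Sep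
  sep_S : (⨅ a : α, ⨅ b : α, ⨅ c : α,
      imp (imp a (imp b c)) (imp (imp a b) (imp a c))) ∈ Sep
  sep_mp : ∀ {a b : α}, imp a b ∈ Sep → a ∈ Sep → b ∈ Sep

namespace ImpAlg

variable {α : Type} [CompleteLattice α] (A : ImpAlg α)

/-- Entailment: `a ⊢_Σ b` iff `(a → b) ∈ Σ`. -/
def Ent (a b : α) : Prop := A.imp a b ∈ A.Sep

/-- `a ≡_Σ b` -/
def EquivS (a b : α) : Prop := A.Ent a b ∧ A.Ent b a

/-- The existential quantifier `∃_{i∈I} c_i := ⋀_x (⋀_i (c_i → x) → x)`. -/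
def Eex {I : Type} (c : I → α) : α := ⨅ x : α, A.imp (⨅ i, A.imp (c i) x) x

/-- `a × b := ⋀_x ((a → b → x) → x)`. -/
def times (a b : α) : α := ⨅ x : α, A.imp (A.imp a (A.imp b x)) x

open Classical in
/-- `δ_I(j,j')`. -/
noncomputable def delta {I : Type} (j j' : I) : α :=
  if j = j' then ⨅ x : α, A.imp (A.imp ⊤ x) x else A.imp ⊤ ⊥

/-- ×-disjoint family. -/
def TimesDisjoint {I : Type} (a : I → α) : Prop :=
  (⨅ i, ⨅ i', A.imp (A.times (a i) (a i')) (A.delta i i')) ∈ A.Sep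

/-- ∧-disjoint family. -/
def WedgeDisjoint {I : Type} (a : I → α) : Prop :=
  (⨅ i, ⨅ i', A.imp (a i ⊓ a i') (A.delta i i')) ∈ A.Sep

/-- ×-functional two-indexed family. -/
def TimesFunctional {I J : Type} (b : I → J → α) : Prop :=
  (⨅ i, ⨅ j, ⨅ j', A.imp (A.times (b i j) (b i j')) (A.delta j j')) ∈ A.Sep

/-- Supercompact element. -/
def Supercompact (a : α) : Prop :=
  ∀ {I : Type} (b : I → α), A.Ent a (A.Eex b) → ∃ i, A.Ent a (b i)

/-- Indecomposable element. -/
def Indecomposable (a : α) : Prop :=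
  ∀ {I : Type} (b : I → α), A.TimesDisjoint b → A.Ent a (A.Eex b) → ∃ i, A.Ent a (b i)

/-- Supercompact (SK) family. -/
def SKFam {I : Type} (a : I → α) : Prop :=
  ∀ (J : I → Type) (b : ∀ i, J i → α),
    (⨅ i, A.imp (a i) (A.Eex (b i))) ∈ A.Sep →
    ∃ f : ∀ i, J i, (⨅ i, A.imp (a i) (b i (f i))) ∈ A.Sep

/-- Uniformly supercompact (U-SK) family. -/
def USKFam {I : Type} (a : I → α) : Prop :=
  ∀ {K : Type} (f : K → I), A.SKFam (a ∘ f)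

/-- Componentwise supercompact (cSK) family. -/
def cSKFam {I : Type} (a : I → α) : Prop := ∀ i, A.Supercompact (a i)

/-- Functionally supercompact (fSK) family. -/
def fSKFam {I : Type} (a : I → α) : Prop :=
  ∀ {J : Type} (b : I → J → α), A.TimesFunctional b →
    (⨅ i, A.imp (a i) (A.Eex (b i))) ∈ A.Sep →
    ∃! f : I → J, (⨅ i, A.imp (a i) (b i (f i))) ∈ A.Sep

/-- Weakly functionally supercompact (wfSK) family. -/
def wfSKFam {I : Type} (a : I → α) : Prop :=
  ∀ {J : Type} (b : I → J → α), A.TimesFunctional b →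
    (⨅ i, A.imp (a i) (A.Eex (b i))) ∈ A.Sep →
    ∃ f : I → J, (⨅ i, A.imp (a i) (b i (f i))) ∈ A.Sep

/-- Uniformly functionally supercompact (U-fSK) family. -/
def UfSKFam {I : Type} (a : I → α) : Prop :=
  ∀ {K : Type} (f : K → I), A.fSKFam (a ∘ f)

/-- Uniformly weakly functionally supercompact (U-wfSK) family. -/
def UwfSKFam {I : Type} (a : I → α) : Prop :=
  ∀ {K : Type} (f : K → I), A.wfSKFam (a ∘ f)

/-- Componentwise indecomposable (cInd) family. -/
def cIndFam {I : Type} (a : I → α) : Prop := ∀ i, A.Indecomposable (a i)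

end ImpAlg

namespace ImpAlgAux

variable {α : Type} [CompleteLattice α] (A : ImpAlg α)

/-- A family is derivable if its infimum is in the separator. -/
def Der {ι : Type} (P : ι → α) : Prop := (⨅ i, P i) ∈ A.Sep

variable {A}

lemma imp_iInf' {ι : Type} (a : α) (g : ι → α) :
    A.imp a (⨅ i, g i) = ⨅ i, A.imp a (g i) := by
  rw [iInf, A.imp_iInf, iInf_range]

lemma der_K {ι : Type} {P Q : ι → α} :
    Der A (fun i => A.imp (P i) (A.imp (Q i) (P i))) :=
  A.sep_up A.sep_K (le_iInf fun i =>
    (iInf_le _ (P i)).trans (iInf_le _ (Q i)))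

lemma der_S {ι : Type} {P Q R : ι → α} :
    Der A (fun i => A.imp (A.imp (P i) (A.imp (Q i) (R i)))
      (A.imp (A.imp (P i) (Q i)) (A.imp (P i) (R i)))) :=
  A.sep_up A.sep_S (le_iInf fun i =>
    (iInf_le _ (P i)).trans ((iInf_le _ (Q i)).trans (iInf_le _ (R i))))

lemma der_mp {ι : Type} {P Q : ι → α}
    (hPQ : Der A (fun i => A.imp (P i) (Q i))) (hP : Der A P) : Der A Q := by
  refine A.sep_mp (A.sep_up hPQ ?_) hP
  rw [imp_iInf']
  exact le_iInf fun i => (iInf_le _ i).trans (A.imp_mono (iInf_le _ i) le_rfl)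

lemma der_id {ι : Type} {P : ι → α} :
    Der A (fun i => A.imp (P i) (P i)) :=
  der_mp (der_mp (der_S (Q := fun i => A.imp (P i) (P i)) (R := P)) der_K) der_K

lemma der_lift {ι : Type} {φ ψ : ι → α} (h : Der A ψ) :
    Der A (fun i => A.imp (φ i) (ψ i)) :=
  der_mp der_K h

lemma der_ap {ι : Type} {φ ψ χ : ι → α}
    (u : Der A (fun i => A.imp (φ i) (A.imp (ψ i) (χ i))))
    (v : Der A (fun i => A.imp (φ i) (ψ i))) :
    Der A (fun i => A.imp (φ i) (χ i)) :=
  der_mp (der_mp der_S u) v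

lemma der_comp {ι : Type} {φ ψ χ : ι → α}
    (u : Der A (fun i => A.imp (φ i) (ψ i)))
    (v : Der A (fun i => A.imp (ψ i) (χ i))) :
    Der A (fun i => A.imp (φ i) (χ i)) :=
  der_ap (der_lift v) u

/-- Application under two contexts. -/
lemma der_ap2 {ι : Type} {φ μ ψ χ : ι → α}
    (u : Der A (fun i => A.imp (φ i) (A.imp (μ i) (A.imp (ψ i) (χ i)))))
    (v : Der A (fun i => A.imp (φ i) (A.imp (μ i) (ψ i)))) :
    Der A (fun i => A.imp (φ i) (A.imp (μ i) (χ i))) :=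
  der_ap (der_ap (der_lift der_S) u) v

lemma der_reindex {ι κ : Type} (r : ι → κ) {P : κ → α} (h : Der A P) :
    Der A (fun i => P (r i)) :=
  A.sep_up h (le_iInf fun i => iInf_le _ (r i))

end ImpAlgAux

open ImpAlgAux in
/-- every SK family is fSK. -/
theorem stmt12 {α : Type} [CompleteLattice α] (A : ImpAlg α)
    {I : Type} (a : I → α) (h : A.SKFam a) :
    A.fSKFam a := by
  intro J b hfun hb
  obtain ⟨f, hf⟩ := h (fun _ => J) b hb
  refine ⟨f, hf, ?_⟩
  intro g hg
  -- families on I × α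
  set AA : I × α → α := fun p => a p.1 with hAA
  set B : I × α → α := fun p => b p.1 (f p.1) with hB
  set C : I × α → α := fun p => b p.1 (g p.1) with hC
  set X : I × α → α := fun p => p.2 with hX
  set M : I × α → α := fun p => A.imp (B p) (A.imp (C p) (X p)) with hM
  have u1 : Der A (fun p => A.imp (AA p) (B p)) :=
    der_reindex (Prod.fst : I × α → I) (P := fun i => A.imp (a i) (b i (f i))) hf
  have u2 : Der A (fun p => A.imp (AA p) (C p)) :=
    der_reindex (Prod.fst : I × α → I) (P := fun i => A.imp (a i) (b i (g i))) hg
  have mid : Der A (fun p => A.imp (AA p) (A.imp (M p) (M p))) :=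
    der_lift der_id
  have mB : Der A (fun p => A.imp (AA p) (A.imp (M p) (B p))) :=
    der_comp u1 der_K
  have mC : Der A (fun p => A.imp (AA p) (A.imp (M p) (C p))) :=
    der_comp u2 der_K
  have t1 : Der A (fun p => A.imp (AA p) (A.imp (M p) (A.imp (C p) (X p)))) :=
    der_ap2 (ψ := B) (χ := fun p => A.imp (C p) (X p)) mid mB
  have t2 : Der A (fun p => A.imp (AA p) (A.imp (M p) (X p))) :=
    der_ap2 (ψ := C) (χ := X) t1 mC
  -- a i ⊢ b i (f i) × b i (g i)
  have h1 : Der A (fun i => A.imp (a i) (A.times (b i (f i)) (b i (g i)))) := by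
    refine A.sep_up t2 (le_iInf fun i => ?_)
    show _ ≤ A.imp (a i) (A.times (b i (f i)) (b i (g i)))
    rw [ImpAlg.times, imp_iInf']
    exact le_iInf fun x => iInf_le _ (i, x)
  -- from ×-functionality
  have ht : Der A (fun i =>
      A.imp (A.times (b i (f i)) (b i (g i))) (A.delta (f i) (g i))) :=
    A.sep_up hfun (le_iInf fun i =>
      (iInf_le _ i).trans ((iInf_le _ (f i)).trans (iInf_le _ (g i))))
  have hδ : Der A (fun i => A.imp (a i) (A.delta (f i) (g i))) :=
    der_comp h1 ht
  -- δ (f i) (g i) ≤ ∃_{_ : f i = g i} ⊤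
  have key : ∀ i, A.delta (f i) (g i) ≤
      A.Eex (fun _ : PLift (f i = g i) => (⊤ : α)) := by
    intro i
    rw [ImpAlg.Eex]
    refine le_iInf fun x => ?_
    by_cases hfg : f i = g i
    · haveI : Nonempty (PLift (f i = g i)) := ⟨⟨hfg⟩⟩
      rw [iInf_const, ImpAlg.delta, if_pos hfg]
      exact iInf_le _ x
    · haveI : IsEmpty (PLift (f i = g i)) := ⟨fun hh => hfg hh.down⟩
      rw [iInf_of_isEmpty, ImpAlg.delta, if_neg hfg]
      exact A.imp_mono le_top bot_le
  have hEx : (⨅ i, A.imp (a i)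
      (A.Eex (fun _ : PLift (f i = g i) => (⊤ : α)))) ∈ A.Sep :=
    A.sep_up hδ (le_iInf fun i =>
      (iInf_le _ i).trans (A.imp_mono le_rfl (key i)))
  obtain ⟨f', -⟩ := h (fun i => PLift (f i = g i)) (fun i _ => (⊤ : α)) hEx
  funext i
  exact ((f' i).down).symm
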